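/- Let k ≥ 2. Every vector field f with components in 𝒫^{k-2}(ℝ²) can be written as f = curl ψ + ∇v₂ for some scalars ψ, v₂ ∈ 𝒫^{k-1}(ℝ²), where curl ψ = (∂₂ψ, −∂₁ψ) denotes the two-dimensional (rotated-gradient) curl of a scalar polynomial. -/

import Mathlib

open MvPolynomial

/-- The formal Laplacian `Δp = ∑ⱼ ∂ⱼ∂ⱼp` of a polynomial in `d` variables. -/
noncomputable def lap {d : ℕ} (p : MvPolynomial (Fin d) ℝ) : MvPolynomial (Fin d) ℝ :=
  ∑ j, pderiv j (pderiv j p)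

/-- The formal divergence `div v = ∑ᵢ ∂ᵢvᵢ` of a polynomial vector field. -/
noncomputable def pdiv {d : ℕ} (v : Fin d → MvPolynomial (Fin d) ℝ) : MvPolynomial (Fin d) ℝ :=
  ∑ i, pderiv i (v i)

/-- The two-dimensional (rotated-gradient) curl of a scalar polynomial:
`curl ψ = (∂₂ψ, −∂₁ψ)` (0-based indices). -/
noncomputable def curl2 (ψ : MvPolynomial (Fin 2) ℝ) : Fin 2 → MvPolynomial (Fin 2) ℝ :=
  ![pderiv 1 ψ, -(pderiv 0 ψ)]

/-!
With `x`, `y` the variables `0`, `1`, the antiderivatives `ψ₀ = ∫ f₀ dy` and `v₀ = ∫ f₁ dy`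
satisfy `f = curl ψ₀ + ∇v₀ + (-∂ₓv₀, ∂ₓψ₀)`. The remainder still has total degree at most
`k - 2`, but its degree in `x` is one less than that of `f`, so iterating exhausts the
`x`-degree; the accumulated antiderivatives have total degree at most `k - 1`.
-/

namespace MvPolynomial

section PDeriv

variable {σ R : Type*} [CommSemiring R] {i : σ} {p : MvPolynomial σ R} {m : σ →₀ ℕ}

theorem add_single_mem_support_of_mem_support_pderiv (h : m ∈ (pderiv i p).support) :
    m + Finsupp.single i 1 ∈ p.support := by
  classical
  rw [mem_support_iff, coeff_pderiv] at h
  exact mem_support_iff.mpr (left_ne_zero_of_mul h)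

theorem totalDegree_pderiv_le : (pderiv i p).totalDegree ≤ p.totalDegree - 1 :=
  Finset.sup_le fun m hm => by
    have := le_totalDegree (add_single_mem_support_of_mem_support_pderiv hm)
    rw [Finsupp.sum_add_index' (fun _ => rfl) (fun _ _ _ => rfl), Finsupp.sum_single_index rfl]
      at this
    omega

theorem degreeOf_pderiv_le : (pderiv i p).degreeOf i ≤ p.degreeOf i - 1 :=
  degreeOf_le_iff.mpr fun m hm => by
    classical
    have := monomial_le_degreeOf i (add_single_mem_support_of_mem_support_pderiv hm)
    rw [Finsupp.add_apply, Finsupp.single_eq_same] at this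
    omega

theorem pderiv_eq_zero_of_degreeOf_eq_zero (h : p.degreeOf i = 0) : pderiv i p = 0 :=
  pderiv_eq_zero_of_notMem_vars fun hi => mem_vars_iff_degreeOf_ne_zero.mp hi h

end PDeriv

section Antideriv

variable {σ K : Type*} [Field K] {i : σ} {p : MvPolynomial σ K}

noncomputable def antideriv (i : σ) (p : MvPolynomial σ K) : MvPolynomial σ K :=
  ∑ m ∈ p.support, monomial (m + Finsupp.single i 1) (coeff m p / (m i + 1))

theorem pderiv_antideriv [CharZero K] (i : σ) (p : MvPolynomial σ K) :
    pderiv i (antideriv i p) = p := by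
  rw [antideriv, map_sum]
  conv_rhs => rw [p.as_sum]
  refine Finset.sum_congr rfl fun m _ => ?_
  rw [pderiv_monomial, add_tsub_cancel_right, Finsupp.add_apply, Finsupp.single_eq_same]
  push_cast
  rw [div_mul_cancel₀ _ (Nat.cast_add_one_ne_zero _)]

theorem exists_mem_support_of_mem_support_antideriv {m : σ →₀ ℕ}
    (h : m ∈ (antideriv i p).support) : ∃ n ∈ p.support, m = n + Finsupp.single i 1 := by
  classical
  obtain ⟨n, hn, hm⟩ := Finset.mem_biUnion.mp (support_sum h)
  exact ⟨n, hn, Finset.mem_singleton.mp (support_monomial_subset hm)⟩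

theorem totalDegree_antideriv_le : (antideriv i p).totalDegree ≤ p.totalDegree + 1 :=
  Finset.sup_le fun m hm => by
    obtain ⟨n, hn, rfl⟩ := exists_mem_support_of_mem_support_antideriv hm
    rw [Finsupp.sum_add_index' (fun _ => rfl) (fun _ _ _ => rfl), Finsupp.sum_single_index rfl]
    exact Nat.add_le_add_right (le_totalDegree hn) 1

theorem degreeOf_antideriv_le_of_ne {j : σ} (hji : j ≠ i) :
    (antideriv i p).degreeOf j ≤ p.degreeOf j :=
  degreeOf_le_iff.mpr fun m hm => by
    obtain ⟨n, hn, rfl⟩ := exists_mem_support_of_mem_support_antideriv hm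
    rw [Finsupp.add_apply, Finsupp.single_eq_of_ne hji, add_zero]
    exact monomial_le_degreeOf j hn

end Antideriv

end MvPolynomial

theorem curl2_add (ψ φ : MvPolynomial (Fin 2) ℝ) : curl2 (ψ + φ) = curl2 ψ + curl2 φ := by
  ext1 i
  fin_cases i <;> simp [curl2, add_comm]

noncomputable def curl2GradRemainder (f : Fin 2 → MvPolynomial (Fin 2) ℝ) :
    Fin 2 → MvPolynomial (Fin 2) ℝ :=
  ![-pderiv 0 (antideriv 1 (f 1)), pderiv 0 (antideriv 1 (f 0))]

theorem eq_curl2_add_grad_add_curl2GradRemainder (f : Fin 2 → MvPolynomial (Fin 2) ℝ)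
    (i : Fin 2) :
    f i = curl2 (antideriv 1 (f 0)) i + pderiv i (antideriv 1 (f 1)) +
      curl2GradRemainder f i := by
  fin_cases i <;> simp [curl2, curl2GradRemainder, pderiv_antideriv]

theorem totalDegree_curl2GradRemainder_le {f : Fin 2 → MvPolynomial (Fin 2) ℝ} {n : ℕ}
    (hf : ∀ i, (f i).totalDegree ≤ n) (i : Fin 2) :
    (curl2GradRemainder f i).totalDegree ≤ n := by
  have key (p : MvPolynomial (Fin 2) ℝ) (hp : p.totalDegree ≤ n) :
      (pderiv 0 (antideriv 1 p)).totalDegree ≤ n :=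
    totalDegree_pderiv_le.trans
      (Nat.sub_le_of_le_add (totalDegree_antideriv_le.trans (Nat.add_le_add_right hp 1)))
  fin_cases i
  · simpa [curl2GradRemainder] using key _ (hf 1)
  · simpa [curl2GradRemainder] using key _ (hf 0)

theorem degreeOf_curl2GradRemainder_le {f : Fin 2 → MvPolynomial (Fin 2) ℝ} {a : ℕ}
    (hf : ∀ i, (f i).degreeOf 0 ≤ a) (i : Fin 2) :
    (curl2GradRemainder f i).degreeOf 0 ≤ a - 1 := by
  have key (p : MvPolynomial (Fin 2) ℝ) (hp : p.degreeOf 0 ≤ a) :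
      (pderiv 0 (antideriv 1 p)).degreeOf 0 ≤ a - 1 :=
    degreeOf_pderiv_le.trans
      (Nat.sub_le_sub_right ((degreeOf_antideriv_le_of_ne (by decide)).trans hp) 1)
  fin_cases i
  · simpa [curl2GradRemainder, degreeOf_neg] using key _ (hf 1)
  · simpa [curl2GradRemainder] using key _ (hf 0)

theorem curl2GradRemainder_eq_zero {f : Fin 2 → MvPolynomial (Fin 2) ℝ}
    (hf : ∀ i, (f i).degreeOf 0 = 0) : curl2GradRemainder f = 0 := by
  have key (p : MvPolynomial (Fin 2) ℝ) (hp : p.degreeOf 0 = 0) : pderiv 0 (antideriv 1 p) = 0 :=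
    pderiv_eq_zero_of_degreeOf_eq_zero
      (Nat.eq_zero_of_le_zero (hp ▸ degreeOf_antideriv_le_of_ne (by decide)))
  ext1 i
  fin_cases i
  · simp [curl2GradRemainder, key _ (hf 1)]
  · simp [curl2GradRemainder, key _ (hf 0)]

theorem exists_curl2_add_grad_of_degreeOf_le (a : ℕ) {n : ℕ}
    {f : Fin 2 → MvPolynomial (Fin 2) ℝ}
    (hfa : ∀ i, (f i).degreeOf 0 ≤ a) (hfn : ∀ i, (f i).totalDegree ≤ n) :
    ∃ ψ v : MvPolynomial (Fin 2) ℝ, ψ.totalDegree ≤ n + 1 ∧ v.totalDegree ≤ n + 1 ∧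
      ∀ i, f i = curl2 ψ i + pderiv i v := by
  have hA {p : MvPolynomial (Fin 2) ℝ} (hp : p.totalDegree ≤ n) :
      (antideriv 1 p).totalDegree ≤ n + 1 :=
    totalDegree_antideriv_le.trans (Nat.add_le_add_right hp 1)
  induction a generalizing f with
  | zero =>
    refine ⟨_, _, hA (hfn 0), hA (hfn 1), fun i => ?_⟩
    rw [eq_curl2_add_grad_add_curl2GradRemainder f i,
      curl2GradRemainder_eq_zero (fun j => Nat.eq_zero_of_le_zero (hfa j)), Pi.zero_apply,
      add_zero]
  | succ a ih =>
    obtain ⟨ψ, v, hψ, hv, hr⟩ :=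
      ih (degreeOf_curl2GradRemainder_le hfa) (totalDegree_curl2GradRemainder_le hfn)
    refine ⟨antideriv 1 (f 0) + ψ, antideriv 1 (f 1) + v,
      (totalDegree_add _ _).trans (max_le (hA (hfn 0)) hψ),
      (totalDegree_add _ _).trans (max_le (hA (hfn 1)) hv),
      fun i => ?_⟩
    rw [eq_curl2_add_grad_add_curl2GradRemainder f i, hr i, curl2_add, map_add, Pi.add_apply]
    abel

/-- For `k ≥ 2`, every vector field with components in `𝒫^{k-2}(ℝ²)` can be written as
`curl ψ + ∇v₂` with scalars `ψ, v₂ ∈ 𝒫^{k-1}(ℝ²)`. -/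
theorem curl2_add_grad_decomposition (k : ℕ) (hk : 2 ≤ k)
    (f : Fin 2 → MvPolynomial (Fin 2) ℝ) (hf : ∀ i, (f i).totalDegree ≤ k - 2) :
    ∃ (ψ v₂ : MvPolynomial (Fin 2) ℝ),
      ψ.totalDegree ≤ k - 1 ∧ v₂.totalDegree ≤ k - 1 ∧
      ∀ i, f i = curl2 ψ i + pderiv i v₂ := by
  obtain ⟨ψ, v, hψ, hv, hdecomp⟩ := exists_curl2_add_grad_of_degreeOf_le (k - 2)
    (fun i => (degreeOf_le_totalDegree _ _).trans (hf i)) hf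
  have hk' : k - 2 + 1 = k - 1 := by omega
  exact ⟨ψ, v, hk' ▸ hψ, hk' ▸ hv, hdecomp⟩
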